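/- Let $\lambda\in\mathbb{C}$ with $\operatorname{Re}\lambda \ge 1$ and write $\sqrt{2\lambda} = a+ib$ (principal square root, $a>0$). Let $x\in\mathbb{C}$ and $\bar{x}\in\mathbb{R}$ be such that $\operatorname{Re} x < \bar{x}$ and $|\operatorname{Im} x| \le (\bar{x} - \operatorname{Re} x)/2$. Then $\operatorname{Re}\bigl(\sqrt{2\lambda}\,(x - \bar{x})\bigr) \le -\tfrac{1}{4}\sqrt{|\lambda|}\,(\bar{x} - \operatorname{Re} x)$. -/

import Mathlib

/-! For `Re z ≥ 0` the principal root `√z` lies in the sector `|Im| ≤ Re`, with `Re √z ≥ √(|z|/2)`.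
If `w` lies in the sector `|Im w| ≤ -Re w / 2`, then the cross term `Im √z · Im w` of `Re (√z w)`
costs at most half of `Re √z · Re w`. -/

namespace Complex

lemma abs_im_cpow_half_le_re {z : ℂ} (hz : 0 ≤ z.re) :
    |(z ^ ((1 : ℂ) / 2)).im| ≤ (z ^ ((1 : ℂ) / 2)).re := by
  rw [one_div, cpow_inv_two_re, abs_cpow_inv_two_im]
  gcongr
  linarith

lemma sqrt_half_norm_le_re_cpow_half {z : ℂ} (hz : 0 ≤ z.re) :
    Real.sqrt (‖z‖ / 2) ≤ (z ^ ((1 : ℂ) / 2)).re := by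
  rw [one_div, cpow_inv_two_re]
  gcongr
  linarith

lemma re_mul_le_half_re_mul_re {s w : ℂ} (hs : |s.im| ≤ s.re) (hw : |w.im| ≤ -w.re / 2) :
    (s * w).re ≤ s.re * w.re / 2 :=
  calc (s * w).re = s.re * w.re - s.im * w.im := mul_re s w
    _ ≤ s.re * w.re + |s.im| * |w.im| := by
        rw [← abs_mul]; linarith [neg_abs_le (s.im * w.im)]
    _ ≤ s.re * w.re + s.re * (-w.re / 2) := by
        gcongr
        exact (abs_nonneg _).trans hs
    _ = s.re * w.re / 2 := by ring

end Complex

open Complex in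
theorem stmt8_general (l : ℂ) (hl : 1 ≤ l.re) (x : ℂ) (xb : ℝ)
    (him : |x.im| ≤ (xb - x.re) / 2) :
    ((2 * l) ^ ((1 : ℂ) / 2) * (x - (xb : ℂ))).re ≤
      -(1 / 4) * Real.sqrt ‖l‖ * (xb - x.re) := by
  set s := (2 * l) ^ ((1 : ℂ) / 2)
  have hre_nonneg : 0 ≤ (2 * l).re := by
    simp only [mul_re, re_ofNat, im_ofNat, zero_mul, sub_zero]; linarith
  have hsqrt_le : Real.sqrt ‖l‖ ≤ s.re := by
    have h := sqrt_half_norm_le_re_cpow_half hre_nonneg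
    rwa [norm_mul, Complex.norm_two, mul_div_cancel_left₀ _ two_ne_zero] at h
  have hw : |(x - xb).im| ≤ -(x - xb).re / 2 := by simpa [neg_sub] using him
  have hd : 0 ≤ xb - x.re := by linarith [(abs_nonneg _).trans him]
  calc (s * (x - xb)).re ≤ s.re * (x - xb).re / 2 :=
        re_mul_le_half_re_mul_re (abs_im_cpow_half_le_re hre_nonneg) hw
    _ = -(s.re * (xb - x.re) / 2) := by rw [sub_re, ofReal_re]; ring
    _ ≤ -(Real.sqrt ‖l‖ * (xb - x.re) / 2) := by gcongr
    _ ≤ -(1 / 4) * Real.sqrt ‖l‖ * (xb - x.re) := by nlinarith [Real.sqrt_nonneg ‖l‖]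

/-- Key estimate for the analytic extension in the space variable:
for `Re λ ≥ 1`, `Re x < x̄` and `|Im x| ≤ (x̄ - Re x)/2`, one has
`Re(√(2λ)(x - x̄)) ≤ -(1/4)√|λ| (x̄ - Re x)`. -/
theorem stmt8 (l : ℂ) (hl : 1 ≤ l.re) (x : ℂ) (xb : ℝ)
    (hx : x.re < xb) (him : |x.im| ≤ (xb - x.re) / 2) :
    ((2 * l) ^ ((1 : ℂ) / 2) * (x - (xb : ℂ))).re ≤
      -(1 / 4) * Real.sqrt ‖l‖ * (xb - x.re) :=
  stmt8_general l hl x xb him
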